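/- arXiv:2209.06986 — 5 statements merged into one kernel-verified Lean document; each statement's English description precedes it below -/
import Mathlib

section
/- The map T : ℝ³ → ℝ³ given by T(X,Y,Z) = (P₁(Y) - P₁(Z), Z, a₁₂(P₁(Y) - P₁(Z))² + ν) has no 2-cycles: if T(T(q)) = q then q = (0, ν, ν), the fixed point of T. -/
/-- T has no 2-cycles: if T(T(q)) = q then q = (0, ν, ν),
the fixed point of T. -/
theorem stmt5 (P₁ : ℝ → ℝ) (a₁₂ ν : ℝ)
    (T : ℝ × ℝ × ℝ → ℝ × ℝ × ℝ)
    (hT : ∀ X Y Z : ℝ, T (X, Y, Z) = (P₁ Y - P₁ Z, Z, a₁₂ * (P₁ Y - P₁ Z) ^ 2 + ν)) :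
    ∀ q : ℝ × ℝ × ℝ, T (T q) = q → q = (0, ν, ν) := by
  rintro ⟨X, Y, Z⟩ h
  rw [hT, hT] at h
  simp only [Prod.mk.injEq] at h
  obtain ⟨h1, h2, h3⟩ := h
  -- h2 : a₁₂ * (P₁ Y - P₁ Z)^2 + ν = Y
  -- h3 : a₁₂ * (P₁ Z - P₁ (a₁₂ * (P₁ Y - P₁ Z)^2 + ν))^2 + ν = Z
  rw [h2] at h3 h1
  -- h3 : a₁₂ * (P₁ Z - P₁ Y)^2 + ν = Z
  have hYZ : Y = Z := by
    rw [show (P₁ Z - P₁ Y)^2 = (P₁ Y - P₁ Z)^2 from by ring] at h3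
    linarith
  have hu : P₁ Y - P₁ Z = 0 := by rw [hYZ]; ring
  have hYν : Y = ν := by rw [← h2, hu]; ring
  have hX : X = 0 := by rw [← h1, hYZ]; ring
  simp [hX, hYν, hYZ ▸ hYν]
end

section
/- If s₀ ∈ ℝ satisfies a₁₂(P₁(s₀) - P₁(ν))² + ν = s₀ and s₀ ≠ ν, then the point (0, s₀, ν) is a periodic point of exact period 3 of the map T(X,Y,Z) = (P₁(Y) - P₁(Z), Z, a₁₂(P₁(Y) - P₁(Z))² + ν); explicitly, T maps (0,s₀,ν) to (P₁(s₀)-P₁(ν), ν, s₀), then to (P₁(ν)-P₁(s₀), s₀, s₀), and back to (0,s₀,ν), and none of these three points is the fixed point (0,ν,ν). -/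
/-- if a₁₂(P₁(s₀)-P₁(ν))² + ν = s₀ and s₀ ≠ ν, then (0,s₀,ν) is a
periodic point of exact period 3 of T, with the explicit orbit, and none of the
three points of the orbit is the fixed point (0,ν,ν). -/
theorem stmt6 (P₁ : ℝ → ℝ) (a₁₂ ν : ℝ) (ha₁₂ : a₁₂ ≠ 0)
    (T : ℝ × ℝ × ℝ → ℝ × ℝ × ℝ)
    (hT : ∀ X Y Z : ℝ, T (X, Y, Z) = (P₁ Y - P₁ Z, Z, a₁₂ * (P₁ Y - P₁ Z) ^ 2 + ν))
    (s₀ : ℝ) (hs₀ : a₁₂ * (P₁ s₀ - P₁ ν) ^ 2 + ν = s₀) (hne : s₀ ≠ ν) :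
    T (0, s₀, ν) = (P₁ s₀ - P₁ ν, ν, s₀) ∧
    T (P₁ s₀ - P₁ ν, ν, s₀) = (P₁ ν - P₁ s₀, s₀, s₀) ∧
    T (P₁ ν - P₁ s₀, s₀, s₀) = (0, s₀, ν) ∧
    (0, s₀, ν) ≠ ((0 : ℝ), ν, ν) ∧
    (P₁ s₀ - P₁ ν, ν, s₀) ≠ ((0 : ℝ), ν, ν) ∧
    (P₁ ν - P₁ s₀, s₀, s₀) ≠ ((0 : ℝ), ν, ν) ∧
    Function.IsPeriodicPt T 3 (0, s₀, ν) ∧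
    ¬ Function.IsPeriodicPt T 1 (0, s₀, ν) := by
  have h1 : T (0, s₀, ν) = (P₁ s₀ - P₁ ν, ν, s₀) := by
    rw [hT]; exact congrArg _ (congrArg _ hs₀)
  have h2 : T (P₁ s₀ - P₁ ν, ν, s₀) = (P₁ ν - P₁ s₀, s₀, s₀) := by
    rw [hT]
    have hsq : (P₁ ν - P₁ s₀) ^ 2 = (P₁ s₀ - P₁ ν) ^ 2 := by ring
    rw [hsq, hs₀]
  have h3 : T (P₁ ν - P₁ s₀, s₀, s₀) = (0, s₀, ν) := by
    rw [hT]
    norm_num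
  refine ⟨h1, h2, h3, ?_, ?_, ?_, ?_, ?_⟩
  · intro h; exact hne (congrArg (fun p => p.2.1) h)
  · intro h; exact hne (congrArg (fun p => p.2.2) h)
  · intro h; exact hne (congrArg (fun p => p.2.1) h)
  · show T^[3] (0, s₀, ν) = (0, s₀, ν)
    simp [Function.iterate_succ_apply, h1, h2, h3]
  · intro h
    have : T^[1] (0, s₀, ν) = (0, s₀, ν) := h
    rw [Function.iterate_one, h1] at this
    exact hne (congrArg (fun p => p.2.2) this)
end

section
/- Let h(s) = a₁₂(P₁(s) - P₁(ν))² + ν - s, where P₁ is a real polynomial of degree d₁ ≥ 1 and a₁₂ ≠ 0. Then h has a real zero s₀ with s₀ ≠ ν. Consequently the map T(X,Y,Z) = (P₁(Y)-P₁(Z), Z, a₁₂(P₁(Y)-P₁(Z))² + ν) has a 3-cycle. -/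
open Polynomial Filter

lemma odd_root_pos (p : Polynomial ℝ) (h : Odd p.natDegree) (hlc : 0 < p.leadingCoeff) :
    ∃ x, p.eval x = 0 := by
  have hn : p.natDegree ≠ 0 := by
    intro h0; rw [h0] at h; simp at h
  have hdeg : 0 < p.degree := natDegree_pos_iff_degree_pos.mp (Nat.pos_of_ne_zero hn)
  -- p(a) > 0 for some a
  have htop : Tendsto (fun x => p.eval x) atTop atTop :=
    p.tendsto_atTop_of_leadingCoeff_nonneg hdeg hlc.le
  obtain ⟨a, ha⟩ := (htop.eventually_ge_atTop 1).exists
  -- p(-b) < 0 for some b, via q = -(p.comp (-X))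
  set q : Polynomial ℝ := -(p.comp (-X)) with hq
  have hX : ((-X : Polynomial ℝ)).natDegree = 1 := by simp
  have hqdeg : q.natDegree = p.natDegree := by
    rw [hq, natDegree_neg, natDegree_comp, hX, mul_one]
  have hqlc : q.leadingCoeff = p.leadingCoeff := by
    rw [hq, leadingCoeff_neg, leadingCoeff_comp (by rw [hX]; norm_num)]
    have : ((-X : Polynomial ℝ)).leadingCoeff = -1 := by simp
    rw [this, Odd.neg_one_pow h, mul_neg_one, neg_neg]
  have hqd : 0 < q.degree := natDegree_pos_iff_degree_pos.mp
    (by rw [hqdeg]; exact Nat.pos_of_ne_zero hn)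
  have htop2 : Tendsto (fun x => q.eval x) atTop atTop :=
    q.tendsto_atTop_of_leadingCoeff_nonneg hqd (by rw [hqlc]; exact hlc.le)
  obtain ⟨b, hb⟩ := (htop2.eventually_ge_atTop 1).exists
  have hb' : p.eval (-b) ≤ -1 := by
    have : q.eval b = -(p.eval (-b)) := by simp [hq]
    linarith [this ▸ hb]
  have hcont : ContinuousOn (fun x => p.eval x) (Set.uIcc (-b) a) :=
    (p.continuous_aeval).continuousOn
  have := intermediate_value_uIcc hcont
  have h0 : (0:ℝ) ∈ Set.uIcc (p.eval (-b)) (p.eval a) :=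
    Set.mem_uIcc.mpr (Or.inl ⟨by linarith, by linarith⟩)
  obtain ⟨x, _, hx⟩ := this h0
  exact ⟨x, hx⟩

lemma odd_root (p : Polynomial ℝ) (h : Odd p.natDegree) : ∃ x, p.eval x = 0 := by
  rcases lt_trichotomy p.leadingCoeff 0 with hlc | hlc | hlc
  · obtain ⟨x, hx⟩ := odd_root_pos (-p) (by rwa [natDegree_neg]) (by rw [leadingCoeff_neg]; linarith)
    exact ⟨x, by simpa using hx⟩
  · exfalso
    have : p = 0 := leadingCoeff_eq_zero.mp hlc
    rw [this] at h; simp at h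
  · exact odd_root_pos p h hlc

/-- h(s) = a₁₂(P₁(s)-P₁(ν))² + ν - s, with P₁ a real polynomial of
degree ≥ 1 and a₁₂ ≠ 0, has a real zero s₀ ≠ ν; consequently T has a 3-cycle. -/
theorem stmt7 (P₁ : Polynomial ℝ) (hdeg : 1 ≤ P₁.natDegree) (a₁₂ ν : ℝ) (ha₁₂ : a₁₂ ≠ 0)
    (T : ℝ × ℝ × ℝ → ℝ × ℝ × ℝ)
    (hT : ∀ X Y Z : ℝ, T (X, Y, Z) =
      (P₁.eval Y - P₁.eval Z, Z, a₁₂ * (P₁.eval Y - P₁.eval Z) ^ 2 + ν)) :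
    ∃ s₀ : ℝ, s₀ ≠ ν ∧ a₁₂ * (P₁.eval s₀ - P₁.eval ν) ^ 2 + ν - s₀ = 0 ∧
      ∃ q : ℝ × ℝ × ℝ, Function.IsPeriodicPt T 3 q ∧ T q ≠ q := by
  obtain ⟨Q, hQ⟩ := Polynomial.X_sub_C_dvd_sub_C_eval (a := ν) (p := P₁)
  have hA : (X - C ν) * Q = P₁ - C (P₁.eval ν) := hQ.symm
  have hAdeg : ((X - C ν) * Q).natDegree = P₁.natDegree := by
    rw [hA, natDegree_sub_C]
  have hQne : Q ≠ 0 := by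
    intro h0; rw [h0, mul_zero] at hAdeg; simp at hAdeg; omega
  have hXC : (X - C ν : Polynomial ℝ) ≠ 0 := X_sub_C_ne_zero ν
  have hmul : ((X - C ν) * Q).natDegree = 1 + Q.natDegree := by
    rw [natDegree_mul hXC hQne, natDegree_X_sub_C]
  -- the polynomial g
  set g : Polynomial ℝ := C a₁₂ * ((X - C ν) * Q ^ 2) - 1 with hg
  have hm : (C a₁₂ * ((X - C ν) * Q ^ 2)).natDegree = 1 + 2 * Q.natDegree := by
    rw [natDegree_mul (by simpa using ha₁₂) (mul_ne_zero hXC (pow_ne_zero 2 hQne)),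
      natDegree_C, natDegree_mul hXC (pow_ne_zero 2 hQne), natDegree_X_sub_C,
      natDegree_pow]
    ring
  have hgdeg : g.natDegree = 1 + 2 * Q.natDegree := by
    rw [hg, show (1 : Polynomial ℝ) = C 1 from (map_one C).symm, natDegree_sub_C, hm]
  have hodd : Odd g.natDegree := by rw [hgdeg]; exact ⟨Q.natDegree, by ring⟩
  obtain ⟨s₀, hs₀⟩ := odd_root g hodd
  have hgev : ∀ s : ℝ, g.eval s = a₁₂ * (s - ν) * (Q.eval s) ^ 2 - 1 := by
    intro s; simp [hg]; ring
  have hne : s₀ ≠ ν := by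
    intro h; rw [h, hgev] at hs₀; simp at hs₀
  have hPs : ∀ s : ℝ, P₁.eval s - P₁.eval ν = (s - ν) * Q.eval s := by
    intro s
    have := congrArg (Polynomial.eval s) hA
    simpa using this.symm
  have hg0 : a₁₂ * (s₀ - ν) * (Q.eval s₀) ^ 2 = 1 := by
    have := hgev s₀ ▸ hs₀; linarith [hs₀.symm ▸ (hgev s₀)]
  have hzero : a₁₂ * (P₁.eval s₀ - P₁.eval ν) ^ 2 + ν - s₀ = 0 := by
    rw [hPs s₀]; linear_combination (s₀ - ν) * hg0
  refine ⟨s₀, hne, hzero, ?_⟩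
  -- the 3-cycle
  have key : a₁₂ * (P₁.eval ν - P₁.eval s₀) ^ 2 + ν = s₀ := by nlinarith [hzero]
  have key2 : a₁₂ * (P₁.eval s₀ - P₁.eval ν) ^ 2 + ν = s₀ := by nlinarith [hzero]
  refine ⟨(P₁.eval s₀ - P₁.eval ν, ν, s₀), ?_, ?_⟩
  · show T^[3] (P₁.eval s₀ - P₁.eval ν, ν, s₀) = (P₁.eval s₀ - P₁.eval ν, ν, s₀)
    have e1 : T (P₁.eval s₀ - P₁.eval ν, ν, s₀) = (P₁.eval ν - P₁.eval s₀, s₀, s₀) := by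
      rw [hT, key]
    have e2 : T (P₁.eval ν - P₁.eval s₀, s₀, s₀) = (0, s₀, ν) := by
      rw [hT]; simp
    have e3 : T (0, s₀, ν) = (P₁.eval s₀ - P₁.eval ν, ν, s₀) := by
      rw [hT, key2]
    simp only [Function.iterate_succ_apply, Function.iterate_zero_apply, e1, e2, e3]
  · intro hcontra
    rw [hT] at hcontra
    have := congrArg (fun p => p.2.1) hcontra
    exact hne this
end

section
/- Suppose A₃ ≠ 0. Define ξ₀(w) = w and ξⱼ an antiderivative of P₂·ξⱼ₋₁ for j = 1,…,d₁. Then H₂(u,v,w) = A₃^{d₁+1}·u - Σ_{j=0}^{d₁} (-1)ʲ A₃^{d₁-j} P₁⁽ʲ⁾(v)·ξⱼ(w) is a first integral of the vector field G(u,v,w) = (P₁(v), P₂(w), A₃), where P₁⁽ʲ⁾ denotes the j-th derivative of P₁. -/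
/-!
Differentiating `H₂` along `G` produces two alternating sums: the `v`-derivative of the `j`-th
term contributes `P₁⁽ʲ⁺¹⁾(v) P₂(w) ξⱼ(w)`, the `w`-derivative contributes
`A₃ P₁⁽ʲ⁾(v) ξⱼ'(w) = A₃ P₁⁽ʲ⁾(v) P₂(w) ξⱼ₋₁(w)`. With the weights `(-1)ʲ A₃^(d₁-j)` these cancel
in consecutive pairs; what survives is `A₃^(d₁+1) P₁(v)` (from `ξ₀' = 1`), which the `u`-term
removes, and the top term with `P₁⁽ᵈ¹⁺¹⁾ = 0`.
-/

open Polynomial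

theorem sum_range_neg_one_pow_mul_pow_telescope {R : Type*} [CommRing R] (a p : R) (d : ℕ)
    (q x x' : ℕ → R) (hx'0 : x' 0 = 1) (hx' : ∀ j < d, x' (j + 1) = p * x j)
    (hq : q (d + 1) = 0) :
    ∑ j ∈ Finset.range (d + 1), (-1) ^ j * a ^ (d - j) * (q (j + 1) * p * x j + q j * x' j * a)
      = a ^ (d + 1) * q 0 := by
  have hpair : ∀ j ∈ Finset.range d,
      (-1) ^ (j + 1) * a ^ (d - (j + 1)) * (q (j + 1) * x' (j + 1) * a)
        = -((-1) ^ j * a ^ (d - j) * (q (j + 1) * p * x j)) := by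
    intro j hj
    have hpow : a ^ (d - j) = a ^ (d - (j + 1)) * a := by
      rw [← pow_succ]; congr 1; have := Finset.mem_range.mp hj; omega
    rw [hx' j (Finset.mem_range.mp hj), hpow]
    ring
  simp only [mul_add, Finset.sum_add_distrib]
  rw [Finset.sum_range_succ, Finset.sum_range_succ' _ d, Finset.sum_congr rfl hpair,
    Finset.sum_neg_distrib, hq, hx'0]
  simp only [Nat.sub_self, Nat.sub_zero, pow_zero, pow_succ]
  ring

theorem fderiv_sub_sum_mul_apply {ι : Type*} (s : Finset ι) (c : ℝ) (a : ι → ℝ)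
    (f g : ι → ℝ → ℝ) (f' g' : ι → ℝ) (u v w : ℝ)
    (hf : ∀ i ∈ s, HasDerivAt (f i) (f' i) v) (hg : ∀ i ∈ s, HasDerivAt (g i) (g' i) w)
    (y : ℝ × ℝ × ℝ) :
    fderiv ℝ (fun p : ℝ × ℝ × ℝ => c * p.1 - ∑ i ∈ s, a i * f i p.2.1 * g i p.2.2) (u, v, w) y
      = c * y.1 - ∑ i ∈ s, a i * (f' i * y.2.1 * g i w + f i v * g' i * y.2.2) := by
  set Lv : ℝ × ℝ × ℝ →L[ℝ] ℝ := (ContinuousLinearMap.fst ℝ ℝ ℝ).comp (.snd ℝ ℝ (ℝ × ℝ))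
  set Lw : ℝ × ℝ × ℝ →L[ℝ] ℝ := (ContinuousLinearMap.snd ℝ ℝ ℝ).comp (.snd ℝ ℝ (ℝ × ℝ))
  have hterm : ∀ i ∈ s, HasFDerivAt (fun p : ℝ × ℝ × ℝ => a i * f i p.2.1 * g i p.2.2)
      ((a i * f i v) • g' i • Lw + g i w • a i • f' i • Lv) (u, v, w) := by
    intro i hi
    have hfv : HasFDerivAt (fun p : ℝ × ℝ × ℝ => f i p.2.1) (f' i • Lv) (u, v, w) :=
      (hf i hi).comp_hasFDerivAt (u, v, w) (hasFDerivAt_fst.comp _ hasFDerivAt_snd)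
    have hgw : HasFDerivAt (fun p : ℝ × ℝ × ℝ => g i p.2.2) (g' i • Lw) (u, v, w) :=
      (hg i hi).comp_hasFDerivAt (u, v, w) (hasFDerivAt_snd.comp _ hasFDerivAt_snd)
    exact (hfv.const_mul (a i)).mul hgw
  have hH : HasFDerivAt (fun p : ℝ × ℝ × ℝ => c * p.1 - ∑ i ∈ s, a i * f i p.2.1 * g i p.2.2)
      (c • ContinuousLinearMap.fst ℝ ℝ (ℝ × ℝ) -
        ∑ i ∈ s, ((a i * f i v) • g' i • Lw + g i w • a i • f' i • Lv)) (u, v, w) :=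
    (hasFDerivAt_fst.const_mul c).sub (HasFDerivAt.fun_sum hterm)
  rw [hH.fderiv]
  simp only [sub_apply, smul_apply, sum_apply, add_apply, ContinuousLinearMap.comp_apply,
    ContinuousLinearMap.coe_fst', ContinuousLinearMap.coe_snd', smul_eq_mul, sub_right_inj, Lv, Lw]
  exact Finset.sum_congr rfl fun i _ => by ring

theorem stmt11_general (P₁ P₂ : Polynomial ℝ) (d₁ : ℕ) (hd₁ : P₁.natDegree = d₁)
    (A₃ : ℝ)
    (ξ : ℕ → ℝ → ℝ) (hξ0 : ∀ w : ℝ, ξ 0 w = w)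
    (hξ : ∀ j : ℕ, 1 ≤ j → j ≤ d₁ → ∀ w : ℝ, HasDerivAt (ξ j) (P₂.eval w * ξ (j - 1) w) w)
    (H₂ : ℝ × ℝ × ℝ → ℝ)
    (hH₂ : ∀ u v w : ℝ, H₂ (u, v, w) = A₃ ^ (d₁ + 1) * u -
      ∑ j ∈ Finset.range (d₁ + 1),
        (-1 : ℝ) ^ j * A₃ ^ (d₁ - j) * ((Polynomial.derivative^[j] P₁).eval v) * ξ j w) :
    ∀ u v w : ℝ, fderiv ℝ H₂ (u, v, w) (P₁.eval v, P₂.eval w, A₃) = 0 := by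
  intro u v w
  have hH : H₂ = fun p : ℝ × ℝ × ℝ => A₃ ^ (d₁ + 1) * p.1 - ∑ j ∈ Finset.range (d₁ + 1),
      (-1 : ℝ) ^ j * A₃ ^ (d₁ - j) * (derivative^[j] P₁).eval p.2.1 * ξ j p.2.2 :=
    funext fun ⟨a, b, c⟩ => hH₂ a b c
  set ξ' : ℕ → ℝ := fun j => if j = 0 then 1 else P₂.eval w * ξ (j - 1) w
  have hξ' : ∀ j ∈ Finset.range (d₁ + 1), HasDerivAt (ξ j) (ξ' j) w := by
    rintro (_ | j) hj
    · simpa [ξ', funext hξ0] using hasDerivAt_id' w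
    · simpa [ξ'] using hξ (j + 1) j.succ_pos (Finset.mem_range_succ_iff.mp hj) w
  have hP : ∀ j ∈ Finset.range (d₁ + 1), HasDerivAt (fun y => (derivative^[j] P₁).eval y)
      ((derivative^[j + 1] P₁).eval v) v := fun j _ => by
    simpa only [Function.iterate_succ_apply'] using (derivative^[j] P₁).hasDerivAt v
  rw [hH, fderiv_sub_sum_mul_apply _ _ _ _ _ _ _ u v w hP hξ', sub_eq_zero, eq_comm]
  exact sum_range_neg_one_pow_mul_pow_telescope A₃ (P₂.eval w) d₁
    (fun j => (derivative^[j] P₁).eval v) (fun j => ξ j w) ξ' (if_pos rfl)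
    (fun j _ => if_neg j.succ_ne_zero)
    (by simp [iterate_derivative_eq_zero, hd₁])

/-- with A₃ ≠ 0, ξ₀(w) = w and ξⱼ' = P₂·ξⱼ₋₁ for 1 ≤ j ≤ d₁,
H₂(u,v,w) = A₃^(d₁+1)·u - ∑_{j=0}^{d₁} (-1)ʲ A₃^(d₁-j) P₁⁽ʲ⁾(v)·ξⱼ(w)
is a first integral of G(u,v,w) = (P₁(v), P₂(w), A₃). -/
theorem stmt11 (P₁ P₂ : Polynomial ℝ) (d₁ : ℕ) (hd₁ : P₁.natDegree = d₁) (hd₁' : 1 ≤ d₁)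
    (A₃ : ℝ) (hA₃ : A₃ ≠ 0)
    (ξ : ℕ → ℝ → ℝ) (hξ0 : ∀ w : ℝ, ξ 0 w = w)
    (hξ : ∀ j : ℕ, 1 ≤ j → j ≤ d₁ → ∀ w : ℝ, HasDerivAt (ξ j) (P₂.eval w * ξ (j - 1) w) w)
    (H₂ : ℝ × ℝ × ℝ → ℝ)
    (hH₂ : ∀ u v w : ℝ, H₂ (u, v, w) = A₃ ^ (d₁ + 1) * u -
      ∑ j ∈ Finset.range (d₁ + 1),
        (-1 : ℝ) ^ j * A₃ ^ (d₁ - j) * ((Polynomial.derivative^[j] P₁).eval v) * ξ j w) :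
    ∀ u v w : ℝ, fderiv ℝ H₂ (u, v, w) (P₁.eval v, P₂.eval w, A₃) = 0 :=
  stmt11_general P₁ P₂ d₁ hd₁ A₃ ξ hξ0 hξ H₂ hH₂
end

section
/- Suppose A₃ ≠ 0. The functions H₁(u,v,w) = Q₂(w) - A₃·v (with Q₂' = P₂, deg P₂ ≥ 1) and H₂ as in the previous statement are functionally independent: their gradients are linearly independent on a dense open subset of ℝ³ (equivalently, off a set of Lebesgue measure zero). -/
/-!
The gradients are in fact independent at every point, so `U = ℝ³` works: `∂H₁/∂u = 0`, while
`∂H₂/∂u = A₃ ^ (d₁ + 1)` and `∂H₁/∂v = -A₃` are nonzero, so the `(u, v)`-minor of the Jacobian is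
triangular with nonzero diagonal.
-/

theorem ContinuousLinearMap.linearIndependent_pair_of_apply {𝕜 E F : Type*}
    [NontriviallyNormedField 𝕜] [NormedAddCommGroup E] [NormedSpace 𝕜 E]
    [NormedAddCommGroup F] [NormedSpace 𝕜 F] {φ ψ : E →L[𝕜] F} {a b : E}
    (hφa : φ a = 0) (hψa : ψ a ≠ 0) (hφb : φ b ≠ 0) : LinearIndependent 𝕜 ![φ, ψ] := by
  rw [LinearIndependent.pair_iff]
  intro s t hst
  have ht : t = 0 := by simpa [hφa, hψa] using congr($hst a)
  subst ht
  simpa [hφb] using congr($hst b)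

theorem fderiv_apply_eq_of_hasDerivAt_comp {𝕜 E F : Type*} [NontriviallyNormedField 𝕜]
    [NormedAddCommGroup E] [NormedSpace 𝕜 E] [NormedAddCommGroup F] [NormedSpace 𝕜 F]
    {H : E → F} {γ : 𝕜 → E} {t : 𝕜} {e : E} {c : F} (hH : DifferentiableAt 𝕜 H (γ t))
    (hγ : HasDerivAt γ e t) (hc : HasDerivAt (H ∘ γ) c t) : fderiv 𝕜 H (γ t) e = c :=
  (hH.hasFDerivAt.comp_hasDerivAt t hγ).unique hc

theorem differentiable_of_hasDerivAt_mul_pred {f : ℝ → ℝ} {ξ : ℕ → ℝ → ℝ} {d : ℕ}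
    (hξ0 : ∀ w : ℝ, ξ 0 w = w)
    (hξ : ∀ j : ℕ, 1 ≤ j → j ≤ d → ∀ w : ℝ, HasDerivAt (ξ j) (f w * ξ (j - 1) w) w) :
    ∀ j ≤ d, Differentiable ℝ (ξ j)
  | 0, _ => by rw [show ξ 0 = id from funext hξ0]; exact differentiable_id
  | j + 1, hj => fun w => (hξ (j + 1) j.succ_pos hj w).differentiableAt

theorem differentiable_of_eq_mul_sub_sum {H : ℝ × ℝ × ℝ → ℝ} {c : ℝ} {d : ℕ}
    (a : ℕ → ℝ) (p : ℕ → Polynomial ℝ) {ξ : ℕ → ℝ → ℝ} (hξ : ∀ j ≤ d, Differentiable ℝ (ξ j))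
    (hH : ∀ u v w : ℝ,
      H (u, v, w) = c * u - ∑ j ∈ Finset.range (d + 1), a j * (p j).eval v * ξ j w) :
    Differentiable ℝ H := by
  rw [show H = fun q => c * q.1 - ∑ j ∈ Finset.range (d + 1), a j * (p j).eval q.2.1 * ξ j q.2.2
    from funext fun ⟨u, v, w⟩ => hH u v w]
  refine (differentiable_const c |>.mul differentiable_fst).sub
    (Differentiable.fun_sum fun j hj => ?_)
  have := hξ j (Nat.lt_succ_iff.mp (Finset.mem_range.mp hj))
  fun_prop

theorem stmt12_general (P₁ P₂ : Polynomial ℝ) (d₁ : ℕ) (A₃ : ℝ) (hA₃ : A₃ ≠ 0)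
    (Q₂ : ℝ → ℝ) (hQ₂ : ∀ w : ℝ, HasDerivAt Q₂ (P₂.eval w) w)
    (ξ : ℕ → ℝ → ℝ) (hξ0 : ∀ w : ℝ, ξ 0 w = w)
    (hξ : ∀ j : ℕ, 1 ≤ j → j ≤ d₁ → ∀ w : ℝ, HasDerivAt (ξ j) (P₂.eval w * ξ (j - 1) w) w)
    (H₁ H₂ : ℝ × ℝ × ℝ → ℝ)
    (hH₁ : ∀ u v w : ℝ, H₁ (u, v, w) = Q₂ w - A₃ * v)
    (hH₂ : ∀ u v w : ℝ, H₂ (u, v, w) = A₃ ^ (d₁ + 1) * u -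
      ∑ j ∈ Finset.range (d₁ + 1),
        (-1 : ℝ) ^ j * A₃ ^ (d₁ - j) * ((Polynomial.derivative^[j] P₁).eval v) * ξ j w) :
    ∃ U : Set (ℝ × ℝ × ℝ), IsOpen U ∧ Dense U ∧
      ∀ q ∈ U, LinearIndependent ℝ ![fderiv ℝ H₁ q, fderiv ℝ H₂ q] := by
  have hQ₂d : Differentiable ℝ Q₂ := fun w => (hQ₂ w).differentiableAt
  have hξd := differentiable_of_hasDerivAt_mul_pred hξ0 hξ
  have hH₁d : Differentiable ℝ H₁ := by
    rw [show H₁ = fun p => Q₂ p.2.2 - A₃ * p.2.1 from funext fun ⟨u, v, w⟩ => hH₁ u v w]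
    fun_prop
  have hH₂d : Differentiable ℝ H₂ := differentiable_of_eq_mul_sub_sum
    (fun j => (-1 : ℝ) ^ j * A₃ ^ (d₁ - j)) (fun j => Polynomial.derivative^[j] P₁) hξd hH₂
  refine ⟨Set.univ, isOpen_univ, dense_univ, fun ⟨u, v, w⟩ _ => ?_⟩
  have hu : HasDerivAt (fun t : ℝ => (t, v, w)) (1, 0, 0) u :=
    (hasDerivAt_id u).prodMk (hasDerivAt_const u (v, w))
  have hv : HasDerivAt (fun t : ℝ => (u, t, w)) (0, 1, 0) v :=
    (hasDerivAt_const v u).prodMk ((hasDerivAt_id v).prodMk (hasDerivAt_const v w))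
  have h₁u : fderiv ℝ H₁ (u, v, w) (1, 0, 0) = 0 := by
    refine fderiv_apply_eq_of_hasDerivAt_comp (hH₁d _) hu ?_
    simpa [Function.comp_def, hH₁] using hasDerivAt_const u (Q₂ w - A₃ * v)
  have h₂u : fderiv ℝ H₂ (u, v, w) (1, 0, 0) = A₃ ^ (d₁ + 1) := by
    refine fderiv_apply_eq_of_hasDerivAt_comp (hH₂d _) hu ?_
    simp only [Function.comp_def, hH₂]
    exact (hasDerivAt_const_mul _).sub_const _
  have h₁v : fderiv ℝ H₁ (u, v, w) (0, 1, 0) = -A₃ := by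
    refine fderiv_apply_eq_of_hasDerivAt_comp (hH₁d _) hv ?_
    simp only [Function.comp_def, hH₁]
    simpa using (hasDerivAt_const_mul A₃).const_sub (Q₂ w)
  exact ContinuousLinearMap.linearIndependent_pair_of_apply h₁u
    (by rw [h₂u]; exact pow_ne_zero _ hA₃) (by rw [h₁v]; exact neg_ne_zero.mpr hA₃)

/-- with A₃ ≠ 0, H₁(u,v,w) = Q₂(w) - A₃·v (Q₂' = P₂, deg P₂ ≥ 1) and
H₂ as in Statement 11 are functionally independent: their gradients are linearly
independent on a dense open subset of ℝ³. -/
theorem stmt12 (P₁ P₂ : Polynomial ℝ) (d₁ : ℕ) (hd₁ : P₁.natDegree = d₁) (hd₁' : 1 ≤ d₁)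
    (hd₂ : 1 ≤ P₂.natDegree) (A₃ : ℝ) (hA₃ : A₃ ≠ 0)
    (Q₂ : ℝ → ℝ) (hQ₂ : ∀ w : ℝ, HasDerivAt Q₂ (P₂.eval w) w)
    (ξ : ℕ → ℝ → ℝ) (hξ0 : ∀ w : ℝ, ξ 0 w = w)
    (hξ : ∀ j : ℕ, 1 ≤ j → j ≤ d₁ → ∀ w : ℝ, HasDerivAt (ξ j) (P₂.eval w * ξ (j - 1) w) w)
    (H₁ H₂ : ℝ × ℝ × ℝ → ℝ)
    (hH₁ : ∀ u v w : ℝ, H₁ (u, v, w) = Q₂ w - A₃ * v)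
    (hH₂ : ∀ u v w : ℝ, H₂ (u, v, w) = A₃ ^ (d₁ + 1) * u -
      ∑ j ∈ Finset.range (d₁ + 1),
        (-1 : ℝ) ^ j * A₃ ^ (d₁ - j) * ((Polynomial.derivative^[j] P₁).eval v) * ξ j w) :
    ∃ U : Set (ℝ × ℝ × ℝ), IsOpen U ∧ Dense U ∧
      ∀ q ∈ U, LinearIndependent ℝ ![fderiv ℝ H₁ q, fderiv ℝ H₂ q] :=
  stmt12_general P₁ P₂ d₁ A₃ hA₃ Q₂ hQ₂ ξ hξ0 hξ H₁ H₂ hH₁ hH₂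
end
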